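/- arXiv:math/0306193 — 4 statements merged into one kernel-verified Lean document; each statement's English description precedes it below -/
import Mathlib

section
/- In a spark complex, the curvature map δ₁ from the group of degree-k spark classes to E^{k+1} is a group homomorphism whose image equals Z_I^{k+1}(E*), the group of closed elements of E^{k+1} that are F*-cohomologous to an element of I^{k+1}. -/
section SparkMachinery

variable (F : ℤ → Type) [∀ k, AddCommGroup (F k)]
  (d : ∀ k : ℤ, F k →+ F (k + 1))
  (E I : ∀ k : ℤ, AddSubgroup (F k))

/-- The group of homological sparks of degree `k+1`:
elements `a ∈ F^{k+1}` with `da = φ - r`, `φ ∈ E^{k+2}`, `r ∈ I^{k+2}`. -/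
def sparkSub (k : ℤ) : AddSubgroup (F (k + 1)) where
  carrier := {a | ∃ φ ∈ E (k + 1 + 1), ∃ r ∈ I (k + 1 + 1), d (k + 1) a = φ - r}
  zero_mem' := ⟨0, (E (k + 1 + 1)).zero_mem, 0, (I (k + 1 + 1)).zero_mem, by simp⟩
  add_mem' := by
    rintro a b ⟨φ, hφ, r, hr, ha⟩ ⟨ψ, hψ, t, ht, hb⟩
    exact ⟨φ + ψ, (E _).add_mem hφ hψ, r + t, (I _).add_mem hr ht, by
      simp only [map_add, ha, hb]; abel⟩
  neg_mem' := by
    rintro a ⟨φ, hφ, r, hr, ha⟩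
    exact ⟨-φ, (E _).neg_mem hφ, -r, (I _).neg_mem hr, by
      simp only [map_neg, ha]; abel⟩

/-- The subgroup of trivial sparks `db + s`, `b ∈ F^k`, `s ∈ I^{k+1}`. -/
def trivSub (k : ℤ) : AddSubgroup (F (k + 1)) where
  carrier := {a | ∃ b : F k, ∃ s ∈ I (k + 1), a = d k b + s}
  zero_mem' := ⟨0, 0, (I (k + 1)).zero_mem, by simp⟩
  add_mem' := by
    rintro a b ⟨c, s, hs, ha⟩ ⟨c', s', hs', hb⟩
    exact ⟨c + c', s + s', (I _).add_mem hs hs', by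
      simp only [ha, hb, map_add]; abel⟩
  neg_mem' := by
    rintro a ⟨c, s, hs, ha⟩
    exact ⟨-c, -s, (I _).neg_mem hs, by simp only [ha, map_neg]; abel⟩

/-- The group of spark classes of degree `k+1`: sparks modulo trivial sparks. -/
def SparkClasses (k : ℤ) :=
  sparkSub F d E I k ⧸ (trivSub F d I k).addSubgroupOf (sparkSub F d E I k)

instance (k : ℤ) : AddCommGroup (SparkClasses F d E I k) :=
  QuotientAddGroup.Quotient.addCommGroup _

end SparkMachinery

theorem eq_of_sub_eq_sub_of_disjoint {G : Type*} [AddCommGroup G] {E I : AddSubgroup G}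
    (hEI : Disjoint E I) {φ φ' r r' : G} (hφ : φ ∈ E) (hφ' : φ' ∈ E) (hr : r ∈ I)
    (hr' : r' ∈ I) (h : φ - r = φ' - r') : φ = φ' := by
  rw [sub_eq_sub_iff_sub_eq_sub] at h
  refine sub_eq_zero.mp (AddSubgroup.disjoint_def.mp hEI (sub_mem hφ hφ') ?_)
  exact h ▸ sub_mem hr hr'

section SparkCurvature

variable {F : ℤ → Type} [∀ k, AddCommGroup (F k)] {d : ∀ k : ℤ, F k →+ F (k + 1)}
  {E I : ∀ k : ℤ, AddSubgroup (F k)} {k : ℤ}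

/-- The component `φ` of `da = φ - r`, unique because `E ∩ I = 0`. -/
noncomputable def sparkCurvature (hEI : Disjoint (E (k + 1 + 1)) (I (k + 1 + 1))) :
    sparkSub F d E I k →+ E (k + 1 + 1) :=
  AddMonoidHom.mk' (fun a => ⟨a.2.choose, a.2.choose_spec.1⟩) fun a b => by
    obtain ⟨r, hr, hda⟩ := a.2.choose_spec.2
    obtain ⟨s, hs, hdb⟩ := b.2.choose_spec.2
    obtain ⟨t, ht, hdab⟩ := (a + b).2.choose_spec.2
    refine Subtype.ext (eq_of_sub_eq_sub_of_disjoint hEI (a + b).2.choose_spec.1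
      (add_mem a.2.choose_spec.1 b.2.choose_spec.1) ht (add_mem hr hs) ?_)
    calc _ = d (k + 1) a + d (k + 1) b := hdab.symm.trans (map_add _ _ _)
      _ = (a.2.choose - r) + (b.2.choose - s) := congrArg₂ (· + ·) hda hdb
      _ = _ := by simp only [AddSubgroup.coe_add]; abel

theorem exists_d_eq_sparkCurvature_sub (hEI : Disjoint (E (k + 1 + 1)) (I (k + 1 + 1)))
    (a : sparkSub F d E I k) :
    ∃ r ∈ I (k + 1 + 1), d (k + 1) a = sparkCurvature hEI a - r :=
  a.2.choose_spec.2

theorem sparkCurvature_eq (hEI : Disjoint (E (k + 1 + 1)) (I (k + 1 + 1)))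
    {a : F (k + 1)} (ha : a ∈ sparkSub F d E I k) {φ : F (k + 1 + 1)} (hφ : φ ∈ E (k + 1 + 1))
    {r : F (k + 1 + 1)} (hr : r ∈ I (k + 1 + 1)) (h : d (k + 1) a = φ - r) :
    sparkCurvature hEI ⟨a, ha⟩ = ⟨φ, hφ⟩ := by
  obtain ⟨r', hr', hda⟩ := exists_d_eq_sparkCurvature_sub hEI ⟨a, ha⟩
  exact Subtype.ext (eq_of_sub_eq_sub_of_disjoint hEI (SetLike.coe_mem _) hφ hr' hr
    (hda.symm.trans h))

theorem trivSub_le_ker_sparkCurvature (hEI : Disjoint (E (k + 1 + 1)) (I (k + 1 + 1)))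
    (hdd : ∀ (k : ℤ) (x : F k), d (k + 1) (d k x) = 0)
    (hdI : ∀ (k : ℤ) (x : F k), x ∈ I k → d k x ∈ I (k + 1)) :
    (trivSub F d I k).addSubgroupOf (sparkSub F d E I k) ≤ (sparkCurvature hEI).ker := by
  rintro ⟨a, ha⟩ ⟨b, s, hs, rfl⟩
  have hda : d (k + 1) (d k b + s) = 0 - -d (k + 1) s := by
    rw [map_add, hdd]
    abel
  exact sparkCurvature_eq hEI ha (zero_mem _) (neg_mem (hdI _ _ hs)) hda

/-- The paper's `δ₁`. -/
noncomputable def sparkClassCurvature (hEI : Disjoint (E (k + 1 + 1)) (I (k + 1 + 1)))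
    (hdd : ∀ (k : ℤ) (x : F k), d (k + 1) (d k x) = 0)
    (hdI : ∀ (k : ℤ) (x : F k), x ∈ I k → d k x ∈ I (k + 1)) :
    SparkClasses F d E I k →+ E (k + 1 + 1) :=
  QuotientAddGroup.lift _ _ (trivSub_le_ker_sparkCurvature hEI hdd hdI)

/-- `dφ ∈ E ∩ I`, because `dφ = dr` by `d² = 0`. -/
theorem d_sparkCurvature_eq_zero (hEI : Disjoint (E (k + 1 + 1)) (I (k + 1 + 1)))
    (hEI' : Disjoint (E (k + 1 + 1 + 1)) (I (k + 1 + 1 + 1)))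
    (hdd : ∀ (k : ℤ) (x : F k), d (k + 1) (d k x) = 0)
    (hdE : ∀ (k : ℤ) (x : F k), x ∈ E k → d k x ∈ E (k + 1))
    (hdI : ∀ (k : ℤ) (x : F k), x ∈ I k → d k x ∈ I (k + 1)) (a : sparkSub F d E I k) :
    d (k + 1 + 1) (sparkCurvature hEI a : F (k + 1 + 1)) = 0 := by
  obtain ⟨r, hr, hda⟩ := exists_d_eq_sparkCurvature_sub hEI a
  have hdd_a := hdd (k + 1) a
  rw [hda, map_sub, sub_eq_zero] at hdd_a
  exact AddSubgroup.disjoint_def.mp hEI' (hdE _ _ (SetLike.coe_mem _)) (hdd_a ▸ hdI _ _ hr)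

theorem range_sparkClassCurvature (hEI : Disjoint (E (k + 1 + 1)) (I (k + 1 + 1)))
    (hEI' : Disjoint (E (k + 1 + 1 + 1)) (I (k + 1 + 1 + 1)))
    (hdd : ∀ (k : ℤ) (x : F k), d (k + 1) (d k x) = 0)
    (hdE : ∀ (k : ℤ) (x : F k), x ∈ E k → d k x ∈ E (k + 1))
    (hdI : ∀ (k : ℤ) (x : F k), x ∈ I k → d k x ∈ I (k + 1)) :
    Set.range (sparkClassCurvature hEI hdd hdI) =
      {ψ : E (k + 1 + 1) | d (k + 1 + 1) (ψ : F (k + 1 + 1)) = 0 ∧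
        ∃ r ∈ I (k + 1 + 1), ∃ α : F (k + 1), (ψ : F (k + 1 + 1)) - r = d (k + 1) α} := by
  ext ψ
  constructor
  · rintro ⟨x, rfl⟩
    obtain ⟨a, rfl⟩ := QuotientAddGroup.mk_surjective x
    obtain ⟨r, hr, hda⟩ := exists_d_eq_sparkCurvature_sub hEI a
    exact ⟨d_sparkCurvature_eq_zero hEI hEI' hdd hdE hdI a, r, hr, a, hda.symm⟩
  · rintro ⟨-, r, hr, α, hα⟩
    have hα_spark : α ∈ sparkSub F d E I k := ⟨ψ, ψ.2, r, hr, hα.symm⟩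
    exact ⟨QuotientAddGroup.mk ⟨α, hα_spark⟩, sparkCurvature_eq hEI hα_spark ψ.2 hr hα.symm⟩

end SparkCurvature

theorem stmt_6_general
    (F : ℤ → Type) [∀ k, AddCommGroup (F k)]
    (d : ∀ k : ℤ, F k →+ F (k + 1))
    (hdd : ∀ (k : ℤ) (x : F k), d (k + 1) (d k x) = 0)
    (E I : ∀ k : ℤ, AddSubgroup (F k))
    (hdE : ∀ (k : ℤ) (x : F k), x ∈ E k → d k x ∈ E (k + 1))
    (hdI : ∀ (k : ℤ) (x : F k), x ∈ I k → d k x ∈ I (k + 1))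
    -- Axiom (B): `Eʲ ∩ Iʲ = 0` for `j ≥ 1`
    (hB : ∀ j : ℤ, 1 ≤ j → ∀ x : F j, x ∈ E j → x ∈ I j → x = 0)
    (k : ℤ) (hk : -1 ≤ k) :
    ∃ δ₁ : SparkClasses F d E I k →+ E (k + 1 + 1),
      (∀ (a : F (k + 1)) (ha : a ∈ sparkSub F d E I k)
        (φ : F (k + 1 + 1)) (hφ : φ ∈ E (k + 1 + 1))
        (r : F (k + 1 + 1)) (_ : r ∈ I (k + 1 + 1)),
        d (k + 1) a = φ - r →
        δ₁ (QuotientAddGroup.mk ⟨a, ha⟩) = ⟨φ, hφ⟩) ∧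
      Set.range δ₁ =
        {ψ : E (k + 1 + 1) | d (k + 1 + 1) (ψ : F (k + 1 + 1)) = 0 ∧
          ∃ r ∈ I (k + 1 + 1), ∃ α : F (k + 1),
            (ψ : F (k + 1 + 1)) - r = d (k + 1) α} := by
  have disjoint_of_one_le : ∀ j, 1 ≤ j → Disjoint (E j) (I j) := fun j hj =>
    AddSubgroup.disjoint_def.mpr (hB j hj _)
  have hEI := disjoint_of_one_le (k + 1 + 1) (by omega)
  have hEI' := disjoint_of_one_le (k + 1 + 1 + 1) (by omega)
  exact ⟨sparkClassCurvature hEI hdd hdI, fun a ha φ hφ r hr h => sparkCurvature_eq hEI ha hφ hr h,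
    range_sparkClassCurvature hEI hEI' hdd hdE hdI⟩

/-- In a spark complex, the curvature map `δ₁` from the group
of spark classes of degree `k+1` to `E^{k+2}` is a group homomorphism whose
image equals `Z_I^{k+2}(E)`, the group of closed elements of `E^{k+2}` that are
`F`-cohomologous to an element of `I^{k+2}`. -/
theorem stmt_6
    (F : ℤ → Type) [∀ k, AddCommGroup (F k)]
    (d : ∀ k : ℤ, F k →+ F (k + 1))
    (hdd : ∀ (k : ℤ) (x : F k), d (k + 1) (d k x) = 0)
    (E I : ∀ k : ℤ, AddSubgroup (F k))
    (hdE : ∀ (k : ℤ) (x : F k), x ∈ E k → d k x ∈ E (k + 1))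
    (hdI : ∀ (k : ℤ) (x : F k), x ∈ I k → d k x ∈ I (k + 1))
    -- Axiom (A): the inclusion `E → F` induces an isomorphism on cohomology
    (hAinj : ∀ (j : ℤ) (e : F (j + 1)), e ∈ E (j + 1) → d (j + 1) e = 0 →
      (∃ y : F j, d j y = e) → ∃ y ∈ E j, d j y = e)
    (hAsurj : ∀ (j : ℤ) (x : F (j + 1)), d (j + 1) x = 0 →
      ∃ e ∈ E (j + 1), d (j + 1) e = 0 ∧ ∃ y : F j, x - e = d j y)
    -- Axiom (B): `Eʲ ∩ Iʲ = 0` for `j ≥ 1`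
    (hB : ∀ j : ℤ, 1 ≤ j → ∀ x : F j, x ∈ E j → x ∈ I j → x = 0)
    (k : ℤ) (hk : -1 ≤ k) :
    ∃ δ₁ : SparkClasses F d E I k →+ E (k + 1 + 1),
      (∀ (a : F (k + 1)) (ha : a ∈ sparkSub F d E I k)
        (φ : F (k + 1 + 1)) (hφ : φ ∈ E (k + 1 + 1))
        (r : F (k + 1 + 1)) (_ : r ∈ I (k + 1 + 1)),
        d (k + 1) a = φ - r →
        δ₁ (QuotientAddGroup.mk ⟨a, ha⟩) = ⟨φ, hφ⟩) ∧
      Set.range δ₁ =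
        {ψ : E (k + 1 + 1) | d (k + 1 + 1) (ψ : F (k + 1 + 1)) = 0 ∧
          ∃ r ∈ I (k + 1 + 1), ∃ α : F (k + 1),
            (ψ : F (k + 1 + 1)) - r = d (k + 1) α} :=
  stmt_6_general F d hdd E I hdE hdI hB k hk
end

section
/- In a spark complex, the group of degree-k spark classes with both vanishing curvature and vanishing divisor class is naturally isomorphic to H^k(F*)/H_I^k(F*), where H_I^k(F*) is the image of H^k(I*) in H^k(F*). -/
/-! A cocycle `a` of `F` is a spark with `φ = r = 0`, which gives the map. If such an `a` is a
trivial spark `db + s`, then `ds = da - ddb = 0`, so `s` is a cocycle of `I` and `a` already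
vanishes in `H(F)/H_I(F)`. Conversely a spark with `da = -dt`, `t ∈ I`, differs from the cocycle
`a + t` by the trivial spark `t`. -/

section SparkMachinery

section SparkMachinery

variable (F : ℤ → Type) [∀ k, AddCommGroup (F k)]
  (d : ∀ k : ℤ, F k →+ F (k + 1))
  (E I : ∀ k : ℤ, AddSubgroup (F k))

/-- The cocycles of `F` in degree `k+1`. -/
def closedSub (k : ℤ) : AddSubgroup (F (k + 1)) where
  carrier := {a | d (k + 1) a = 0}
  zero_mem' := by simp
  add_mem' := by intro a b ha hb; simp only [Set.mem_setOf_eq, map_add] at *; simp [ha, hb]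
  neg_mem' := by intro a ha; simp only [Set.mem_setOf_eq, map_neg] at *; simp [ha]

/-- The subgroup `dF^k + Z^{k+1}(I)` of `F^{k+1}`: elements `db + s` with `s`
a cocycle of `I`.  Modding the cocycles of `F` by it yields
`H^{k+1}(F)/H_I^{k+1}(F)`, where `H_I^{k+1}(F)` is the image of `H^{k+1}(I)`
in `H^{k+1}(F)`. -/
def KSub (k : ℤ) : AddSubgroup (F (k + 1)) where
  carrier := {a | ∃ b : F k, ∃ s ∈ I (k + 1), d (k + 1) s = 0 ∧ a = d k b + s}
  zero_mem' := ⟨0, 0, (I _).zero_mem, by simp, by simp⟩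
  add_mem' := by
    rintro a b ⟨c, s, hs, hs0, ha⟩ ⟨c', s', hs', hs0', hb⟩
    exact ⟨c + c', s + s', (I _).add_mem hs hs', by simp [hs0, hs0'], by
      simp only [ha, hb, map_add]; abel⟩
  neg_mem' := by
    rintro a ⟨c, s, hs, hs0, ha⟩
    exact ⟨-c, -s, (I _).neg_mem hs, by simp [hs0], by simp only [ha, map_neg]; abel⟩

/-- `H^{k+1}(F)/H_I^{k+1}(F)`. -/
def HFmodHI (k : ℤ) :=
  closedSub F d k ⧸ (KSub F d I k).addSubgroupOf (closedSub F d k)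

instance (k : ℤ) : AddCommGroup (HFmodHI F d I k) :=
  QuotientAddGroup.Quotient.addCommGroup _

end SparkMachinery

namespace HFmodHI

variable {F : ℤ → Type} [∀ k, AddCommGroup (F k)] {d : ∀ k : ℤ, F k →+ F (k + 1)}
  {E I : ∀ k : ℤ, AddSubgroup (F k)} {k : ℤ}

theorem closedSub_le_sparkSub : closedSub F d k ≤ sparkSub F d E I k := fun a ha =>
  ⟨0, zero_mem _, 0, zero_mem _, by rw [sub_zero]; exact ha⟩

theorem KSub_le_trivSub : KSub F d I k ≤ trivSub F d I k :=
  fun _ ⟨b, s, hs, _, ha⟩ => ⟨b, s, hs, ha⟩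

theorem mem_KSub_of_mem_closedSub_of_mem_trivSub (hdd : ∀ x : F k, d (k + 1) (d k x) = 0)
    {a : F (k + 1)} (ha : a ∈ closedSub F d k) (h : a ∈ trivSub F d I k) :
    a ∈ KSub F d I k := by
  obtain ⟨b, s, hs, rfl⟩ := h
  have hds : d (k + 1) (d k b + s) = 0 := ha
  rw [map_add, hdd, zero_add] at hds
  exact ⟨b, s, hs, hds, rfl⟩

variable (F d E I k) in
def toSparkClasses : HFmodHI F d I k →+ SparkClasses F d E I k :=
  QuotientAddGroup.map _ _ (AddSubgroup.inclusion closedSub_le_sparkSub) fun _ ha =>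
    KSub_le_trivSub (AddSubgroup.mem_addSubgroupOf.mp ha)

theorem toSparkClasses_mk (a : F (k + 1)) (h1 : a ∈ closedSub F d k)
    (h2 : a ∈ sparkSub F d E I k) :
    toSparkClasses F d E I k (QuotientAddGroup.mk ⟨a, h1⟩) = QuotientAddGroup.mk ⟨a, h2⟩ :=
  rfl

theorem toSparkClasses_injective (hdd : ∀ x : F k, d (k + 1) (d k x) = 0) :
    Function.Injective (toSparkClasses F d E I k) := by
  refine (injective_iff_map_eq_zero _).mpr fun x hx => ?_
  induction x using QuotientAddGroup.induction_on with
  | H a =>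
    have ha : (a : F (k + 1)) ∈ trivSub F d I k := AddSubgroup.mem_addSubgroupOf.mp <|
      (QuotientAddGroup.eq_zero_iff (⟨a, closedSub_le_sparkSub a.2⟩ : sparkSub F d E I k)).mp hx
    exact (QuotientAddGroup.eq_zero_iff _).mpr <| AddSubgroup.mem_addSubgroupOf.mpr <|
      mem_KSub_of_mem_closedSub_of_mem_trivSub hdd a.2 ha

theorem range_toSparkClasses :
    Set.range (toSparkClasses F d E I k) =
      {c : SparkClasses F d E I k | ∃ (a : F (k + 1))
        (h2 : a ∈ sparkSub F d E I k) (r : F (k + 1 + 1)),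
        r ∈ I (k + 1 + 1) ∧ (∃ t ∈ I (k + 1), d (k + 1) t = r) ∧
        d (k + 1) a = 0 - r ∧ c = QuotientAddGroup.mk ⟨a, h2⟩} := by
  ext c
  constructor
  · rintro ⟨x, rfl⟩
    induction x using QuotientAddGroup.induction_on with
    | H a =>
      have ha : d (k + 1) a = 0 := a.2
      exact ⟨a, closedSub_le_sparkSub a.2, 0, zero_mem _, ⟨0, zero_mem _, map_zero _⟩,
        by rw [ha, sub_zero], rfl⟩
  · rintro ⟨a, h2, r, -, ⟨t, ht, rfl⟩, hda, rfl⟩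
    have hclosed : a + t ∈ closedSub F d k := by
      show d (k + 1) (a + t) = 0
      rw [map_add, hda, zero_sub, neg_add_cancel]
    refine ⟨QuotientAddGroup.mk ⟨a + t, hclosed⟩, ?_⟩
    rw [toSparkClasses_mk _ _ (closedSub_le_sparkSub hclosed)]
    exact QuotientAddGroup.eq.mpr <|
      AddSubgroup.mem_addSubgroupOf.mpr ⟨0, -t, neg_mem ht, by simp⟩

end HFmodHI

theorem stmt_8_general
    (F : ℤ → Type) [∀ k, AddCommGroup (F k)]
    (d : ∀ k : ℤ, F k →+ F (k + 1))
    (hdd : ∀ (k : ℤ) (x : F k), d (k + 1) (d k x) = 0)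
    (E I : ∀ k : ℤ, AddSubgroup (F k))
    (k : ℤ) :
    ∃ f : HFmodHI F d I k →+ SparkClasses F d E I k,
      (∀ (a : F (k + 1)) (h1 : a ∈ closedSub F d k)
        (h2 : a ∈ sparkSub F d E I k),
        f (QuotientAddGroup.mk ⟨a, h1⟩) = QuotientAddGroup.mk ⟨a, h2⟩) ∧
      Function.Injective f ∧
      Set.range f =
        {c : SparkClasses F d E I k | ∃ (a : F (k + 1))
          (h2 : a ∈ sparkSub F d E I k) (r : F (k + 1 + 1)),
          r ∈ I (k + 1 + 1) ∧ (∃ t ∈ I (k + 1), d (k + 1) t = r) ∧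
          d (k + 1) a = 0 - r ∧ c = QuotientAddGroup.mk ⟨a, h2⟩} :=
  ⟨HFmodHI.toSparkClasses F d E I k, HFmodHI.toSparkClasses_mk,
    HFmodHI.toSparkClasses_injective (hdd k), HFmodHI.range_toSparkClasses⟩

/-- In a spark complex, the group of spark classes of degree
`k+1` with both vanishing curvature and vanishing divisor class is naturally
isomorphic to `H^{k+1}(F)/H_I^{k+1}(F)`, where `H_I^{k+1}(F)` is the image of
`H^{k+1}(I)` in `H^{k+1}(F)`.  (A class has vanishing curvature and divisor
class precisely when it is represented by a spark `a` with `da = 0 - r` where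
`r` is a coboundary of `I`.) -/
theorem stmt_8
    (F : ℤ → Type) [∀ k, AddCommGroup (F k)]
    (d : ∀ k : ℤ, F k →+ F (k + 1))
    (hdd : ∀ (k : ℤ) (x : F k), d (k + 1) (d k x) = 0)
    (E I : ∀ k : ℤ, AddSubgroup (F k))
    (hdE : ∀ (k : ℤ) (x : F k), x ∈ E k → d k x ∈ E (k + 1))
    (hdI : ∀ (k : ℤ) (x : F k), x ∈ I k → d k x ∈ I (k + 1))
    -- Axiom (A): the inclusion `E → F` induces an isomorphism on cohomology
    (hAinj : ∀ (j : ℤ) (e : F (j + 1)), e ∈ E (j + 1) → d (j + 1) e = 0 →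
      (∃ y : F j, d j y = e) → ∃ y ∈ E j, d j y = e)
    (hAsurj : ∀ (j : ℤ) (x : F (j + 1)), d (j + 1) x = 0 →
      ∃ e ∈ E (j + 1), d (j + 1) e = 0 ∧ ∃ y : F j, x - e = d j y)
    -- Axiom (B): `Eʲ ∩ Iʲ = 0` for `j ≥ 1`
    (hB : ∀ j : ℤ, 1 ≤ j → ∀ x : F j, x ∈ E j → x ∈ I j → x = 0)
    (k : ℤ) (hk : -1 ≤ k) :
    ∃ f : HFmodHI F d I k →+ SparkClasses F d E I k,
      (∀ (a : F (k + 1)) (h1 : a ∈ closedSub F d k)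
        (h2 : a ∈ sparkSub F d E I k),
        f (QuotientAddGroup.mk ⟨a, h1⟩) = QuotientAddGroup.mk ⟨a, h2⟩) ∧
      Function.Injective f ∧
      Set.range f =
        {c : SparkClasses F d E I k | ∃ (a : F (k + 1))
          (h2 : a ∈ sparkSub F d E I k) (r : F (k + 1 + 1)),
          r ∈ I (k + 1 + 1) ∧ (∃ t ∈ I (k + 1), d (k + 1) t = r) ∧
          d (k + 1) a = 0 - r ∧ c = QuotientAddGroup.mk ⟨a, h2⟩} :=
  stmt_8_general F d hdd E I k
end SparkMachinery
end

section
/- If a spark complex (F*, E*, I*) is a subspark complex of (F̄*, E*, Ī*) — meaning F* ⊆ F̄* with E* the same, I* ⊆ Ī*, H*(F*) ≅ H*(F̄*) and H*(I*) ≅ H*(Ī*) via the inclusions — then the induced map on groups of spark classes is injective: any spark a ∈ F^k that becomes trivial as an (F̄, Ī)-spark class is trivial as an (F, I)-spark class. -/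
/-- If a spark complex `(F, E, I)` is a subspark complex of
`(F̄, E, Ī)` — meaning `F ⊆ F̄` with the same `E`, `I ⊆ Ī`, and the inclusions
`F → F̄` and `I → Ī` are quasi-isomorphisms — then the induced map on groups of
spark classes is injective: any spark `a ∈ F^{k+1}` that becomes trivial as an
`(F̄, Ī)`-spark class (`a = db̄ + s̄`, `b̄ ∈ F̄^k`, `s̄ ∈ Ī^{k+1}`) is trivial
as an `(F, I)`-spark class. -/
theorem stmt_10
    (Fb : ℤ → Type) [∀ k, AddCommGroup (Fb k)]
    (d : ∀ k : ℤ, Fb k →+ Fb (k + 1))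
    (hdd : ∀ (k : ℤ) (x : Fb k), d (k + 1) (d k x) = 0)
    (Fs E I Ib : ∀ k : ℤ, AddSubgroup (Fb k))
    -- containments
    (hEFs : ∀ k, E k ≤ Fs k) (hIFs : ∀ k, I k ≤ Fs k) (hIIb : ∀ k, I k ≤ Ib k)
    -- closure under the differential
    (hdFs : ∀ (k : ℤ) (x : Fb k), x ∈ Fs k → d k x ∈ Fs (k + 1))
    (hdE : ∀ (k : ℤ) (x : Fb k), x ∈ E k → d k x ∈ E (k + 1))
    (hdI : ∀ (k : ℤ) (x : Fb k), x ∈ I k → d k x ∈ I (k + 1))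
    (hdIb : ∀ (k : ℤ) (x : Fb k), x ∈ Ib k → d k x ∈ Ib (k + 1))
    -- Axiom (A): `E → F̄` induces an isomorphism on cohomology
    (hAinj : ∀ (j : ℤ) (e : Fb (j + 1)), e ∈ E (j + 1) → d (j + 1) e = 0 →
      (∃ y : Fb j, d j y = e) → ∃ y ∈ E j, d j y = e)
    (hAsurj : ∀ (j : ℤ) (x : Fb (j + 1)), d (j + 1) x = 0 →
      ∃ e ∈ E (j + 1), d (j + 1) e = 0 ∧ ∃ y : Fb j, x - e = d j y)
    -- Axiom (B): `Eʲ ∩ Iʲ = 0` and `Eʲ ∩ Īʲ = 0` for `j ≥ 1`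
    (hB : ∀ j : ℤ, 1 ≤ j → ∀ x : Fb j, x ∈ E j → x ∈ Ib j → x = 0)
    (hB' : ∀ j : ℤ, 1 ≤ j → ∀ x : Fb j, x ∈ E j → x ∈ I j → x = 0)
    -- `H^*(F) ≅ H^*(F̄)` via the inclusion
    (hFinj : ∀ (j : ℤ) (x : Fb (j + 1)), x ∈ Fs (j + 1) → d (j + 1) x = 0 →
      (∃ y : Fb j, d j y = x) → ∃ y ∈ Fs j, d j y = x)
    (hFsurj : ∀ (j : ℤ) (x : Fb (j + 1)), d (j + 1) x = 0 →
      ∃ e ∈ Fs (j + 1), d (j + 1) e = 0 ∧ ∃ y : Fb j, x - e = d j y)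
    -- `H^*(I) ≅ H^*(Ī)` via the inclusion
    (hIinj : ∀ (j : ℤ) (x : Fb (j + 1)), x ∈ I (j + 1) → d (j + 1) x = 0 →
      (∃ y ∈ Ib j, d j y = x) → ∃ y ∈ I j, d j y = x)
    (hIsurj : ∀ (j : ℤ) (x : Fb (j + 1)), x ∈ Ib (j + 1) → d (j + 1) x = 0 →
      ∃ e ∈ I (j + 1), d (j + 1) e = 0 ∧ ∃ y ∈ Ib j, x - e = d j y)
    (k : ℤ) (hk : -1 ≤ k)
    (a : Fb (k + 1)) (haF : a ∈ Fs (k + 1))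
    (φ : Fb (k + 1 + 1)) (hφ : φ ∈ E (k + 1 + 1))
    (r : Fb (k + 1 + 1)) (hr : r ∈ I (k + 1 + 1))
    (hspark : d (k + 1) a = φ - r)
    (bb : Fb k) (sb : Fb (k + 1)) (hsb : sb ∈ Ib (k + 1))
    (htriv : a = d k bb + sb) :
    ∃ b ∈ Fs k, ∃ s ∈ I (k + 1), a = d k b + s := by
  have hda : d (k + 1) a = d (k + 1) sb := by
    rw [htriv, map_add, hdd k bb, zero_add]
  -- φ lies in Ī, hence φ = 0 by axiom (B)
  have hφIb : φ ∈ Ib (k + 1 + 1) := by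
    have : φ = d (k + 1) sb + r := by
      have h := hspark; rw [hda] at h
      rw [h]; abel
    rw [this]
    exact add_mem (hdIb _ _ hsb) (hIIb _ hr)
  have hφ0 : φ = 0 := hB (k + 1 + 1) (by linarith) φ hφ hφIb
  have hdsb : d (k + 1) sb = -r := by
    rw [← hda, hspark, hφ0, zero_sub]
  have hdr : d (k + 1 + 1) r = 0 := by
    have h := hdd (k + 1) sb
    rw [hdsb, map_neg, neg_eq_zero] at h
    exact h
  -- pull r back into I
  obtain ⟨t, htI, hdt⟩ := hIinj (k + 1) r hr hdr
    ⟨-sb, neg_mem hsb, by rw [map_neg, hdsb, neg_neg]⟩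
  have hclosed : d (k + 1) (sb + t) = 0 := by
    rw [map_add, hdsb, hdt, neg_add_cancel]
  obtain ⟨e, heI, hde, y, hyIb, hy⟩ :=
    hIsurj k (sb + t) (add_mem hsb (hIIb _ htI)) hclosed
  -- a + t - e is a closed element of F, exact in F̄
  have hmemF : a + t - e ∈ Fs (k + 1) :=
    sub_mem (add_mem haF (hIFs _ htI)) (hIFs _ heI)
  have hxclosed : d (k + 1) (a + t - e) = 0 := by
    rw [map_sub, map_add, hda, hdsb, hdt, hde]
    abel
  have hexact : ∃ z : Fb k, d k z = a + t - e := by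
    refine ⟨bb + y, ?_⟩
    rw [map_add, ← hy, htriv]
    abel
  obtain ⟨b, hbF, hdb⟩ := hFinj k (a + t - e) hmemF hxclosed hexact
  exact ⟨b, hbF, e - t, sub_mem heI htI, by rw [hdb]; abel⟩
end

section
/- If a spark complex (F*, E*, I*) is a subspark complex of (F̄*, E*, Ī*), then every (F̄, Ī)-spark of degree k is (F̄, Ī)-equivalent to a spark lying in F^k; hence the induced map on spark class groups is surjective. -/
/-- If a spark complex `(F, E, I)` is a subspark complex of
`(F̄, E, Ī)`, then every `(F̄, Ī)`-spark of degree `k+1` is `(F̄, Ī)`-equivalent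
to a spark lying in `F^{k+1}` (which is moreover an `(F, I)`-spark with the
same curvature); hence the induced map on spark class groups is surjective. -/
theorem stmt_11
    (Fb : ℤ → Type) [∀ k, AddCommGroup (Fb k)]
    (d : ∀ k : ℤ, Fb k →+ Fb (k + 1))
    (hdd : ∀ (k : ℤ) (x : Fb k), d (k + 1) (d k x) = 0)
    (Fs E I Ib : ∀ k : ℤ, AddSubgroup (Fb k))
    -- containments
    (hEFs : ∀ k, E k ≤ Fs k) (hIFs : ∀ k, I k ≤ Fs k) (hIIb : ∀ k, I k ≤ Ib k)
    -- closure under the differential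
    (hdFs : ∀ (k : ℤ) (x : Fb k), x ∈ Fs k → d k x ∈ Fs (k + 1))
    (hdE : ∀ (k : ℤ) (x : Fb k), x ∈ E k → d k x ∈ E (k + 1))
    (hdI : ∀ (k : ℤ) (x : Fb k), x ∈ I k → d k x ∈ I (k + 1))
    (hdIb : ∀ (k : ℤ) (x : Fb k), x ∈ Ib k → d k x ∈ Ib (k + 1))
    -- Axiom (A): `E → F̄` induces an isomorphism on cohomology
    (hAinj : ∀ (j : ℤ) (e : Fb (j + 1)), e ∈ E (j + 1) → d (j + 1) e = 0 →
      (∃ y : Fb j, d j y = e) → ∃ y ∈ E j, d j y = e)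
    (hAsurj : ∀ (j : ℤ) (x : Fb (j + 1)), d (j + 1) x = 0 →
      ∃ e ∈ E (j + 1), d (j + 1) e = 0 ∧ ∃ y : Fb j, x - e = d j y)
    -- Axiom (B): `Eʲ ∩ Iʲ = 0` and `Eʲ ∩ Īʲ = 0` for `j ≥ 1`
    (hB : ∀ j : ℤ, 1 ≤ j → ∀ x : Fb j, x ∈ E j → x ∈ Ib j → x = 0)
    (hB' : ∀ j : ℤ, 1 ≤ j → ∀ x : Fb j, x ∈ E j → x ∈ I j → x = 0)
    -- `H^*(F) ≅ H^*(F̄)` via the inclusion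
    (hFinj : ∀ (j : ℤ) (x : Fb (j + 1)), x ∈ Fs (j + 1) → d (j + 1) x = 0 →
      (∃ y : Fb j, d j y = x) → ∃ y ∈ Fs j, d j y = x)
    (hFsurj : ∀ (j : ℤ) (x : Fb (j + 1)), d (j + 1) x = 0 →
      ∃ e ∈ Fs (j + 1), d (j + 1) e = 0 ∧ ∃ y : Fb j, x - e = d j y)
    -- `H^*(I) ≅ H^*(Ī)` via the inclusion
    (hIinj : ∀ (j : ℤ) (x : Fb (j + 1)), x ∈ I (j + 1) → d (j + 1) x = 0 →
      (∃ y ∈ Ib j, d j y = x) → ∃ y ∈ I j, d j y = x)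
    (hIsurj : ∀ (j : ℤ) (x : Fb (j + 1)), x ∈ Ib (j + 1) → d (j + 1) x = 0 →
      ∃ e ∈ I (j + 1), d (j + 1) e = 0 ∧ ∃ y ∈ Ib j, x - e = d j y)
    (k : ℤ) (hk : -1 ≤ k)
    (a : Fb (k + 1))
    (φ : Fb (k + 1 + 1)) (hφ : φ ∈ E (k + 1 + 1))
    (rb : Fb (k + 1 + 1)) (hrb : rb ∈ Ib (k + 1 + 1))
    (hspark : d (k + 1) a = φ - rb) :
    ∃ a' ∈ Fs (k + 1),
      (∃ r ∈ I (k + 1 + 1), d (k + 1) a' = φ - r) ∧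
      ∃ bb : Fb k, ∃ sb ∈ Ib (k + 1), a - a' = d k bb + sb := by
  -- d φ = d rb
  have hdφrb : d (k+1+1) φ = d (k+1+1) rb := by
    have h := hdd (k+1) a
    rw [hspark, map_sub, sub_eq_zero] at h
    exact h
  -- both are zero by axiom (B)
  have hφ0 : d (k+1+1) φ = 0 :=
    hB (k+1+1+1) (by linarith) _ (hdE _ _ hφ) (hdφrb ▸ hdIb _ _ hrb)
  have hrb0 : d (k+1+1) rb = 0 := hdφrb ▸ hφ0
  -- replace rb by r ∈ I
  obtain ⟨r, hrI, hr0, sb, hsbIb, hsb⟩ := hIsurj (k+1) rb hrb hrb0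
  -- φ - r is in F, closed, and exact in F̄; make it exact in F
  have hxF : φ - r ∈ Fs (k+1+1) := sub_mem (hEFs _ hφ) (hIFs _ hrI)
  have hx0 : d (k+1+1) (φ - r) = 0 := by rw [map_sub, hφ0, hr0, sub_zero]
  obtain ⟨a₀, ha₀F, hda₀⟩ := hFinj (k+1) (φ - r) hxF hx0
    ⟨a + sb, by rw [map_add, hspark, ← hsb]; abel⟩
  -- the closed correction term
  have hdc : d (k+1) (a + sb - a₀) = 0 := by
    rw [map_sub, map_add, hspark, ← hsb, hda₀]; abel
  obtain ⟨e, heE, he0, y, hy⟩ := hAsurj k (a + sb - a₀) hdc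
  refine ⟨a₀ + e, add_mem ha₀F (hEFs _ heE), ⟨r, hrI, ?_⟩, y, -sb, neg_mem hsbIb, ?_⟩
  · rw [map_add, hda₀, he0, add_zero]
  · rw [← hy]; abel
end
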